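/- Suppose there exist positive semidefinite operators {F_{a|x} ≥ 0} such that Σ_{a,x} tr(F_{a|x} A_{a|x}) > max_{B ∈ LHS} Σ_{a,x} tr(F_{a|x} B_{a|x}). Then for every T > 0 there exist Hamiltonians H_{a|x} ≥ 0 (namely H_{a|x} = (k_B T ln 2) F_{a|x}) such that the averaged work deficit satisfies Δ̄(A, H) > max_{B ∈ LHS(A)} Δ̄(B, H), where Δ̄(A,H) = Σ_{a,x} P(x) P(a|x) Δ(η_{a|x}, H_{a|x}) with A_{a|x} = P(a|x) η_{a|x} and P(x) = 1/|X|. -/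

import Mathlib

open Matrix ComplexOrder

noncomputable section

/-- A density matrix: positive semidefinite with unit trace. -/
def IsDensity {d : ℕ} (ρ : Matrix (Fin d) (Fin d) ℂ) : Prop :=
  ρ.PosSemidef ∧ ρ.trace = 1

/-- Apply a real function to a Hermitian matrix via its spectral decomposition
(junk value `0` on non-Hermitian inputs). -/
def herFun {d : ℕ} (f : ℝ → ℝ) (A : Matrix (Fin d) (Fin d) ℂ) :
    Matrix (Fin d) (Fin d) ℂ :=
  if hA : A.IsHermitian then
    (hA.eigenvectorUnitary : Matrix (Fin d) (Fin d) ℂ) *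
      Matrix.diagonal (fun i => (f (hA.eigenvalues i) : ℂ)) *
      star (hA.eigenvectorUnitary : Matrix (Fin d) (Fin d) ℂ)
  else 0

/-- Base-2 matrix logarithm of a Hermitian matrix (convention `log₂ 0 = 0` on the kernel,
the standard convention for entropic quantities). -/
def matLog2 {d : ℕ} (A : Matrix (Fin d) (Fin d) ℂ) : Matrix (Fin d) (Fin d) ℂ :=
  herFun (Real.logb 2) A

/-- Von Neumann entropy in bits, `S₂(ρ) = −tr(ρ log₂ ρ)`. -/
def vnEnt2 {d : ℕ} (ρ : Matrix (Fin d) (Fin d) ℂ) : ℝ :=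
  -((ρ * matLog2 ρ).trace.re)

/-- Base-2 quantum relative entropy `D(ρ‖σ) = tr(ρ(log₂ρ − log₂σ))`. -/
def relEnt2 {d : ℕ} (ρ σ : Matrix (Fin d) (Fin d) ℂ) : ℝ :=
  ((ρ * (matLog2 ρ - matLog2 σ)).trace).re

/-- The (unnormalized) Boltzmann factor `e^{-H/(k_B T)}`. -/
def boltzmann {d : ℕ} (kB T : ℝ) (H : Matrix (Fin d) (Fin d) ℂ) :
    Matrix (Fin d) (Fin d) ℂ :=
  NormedSpace.exp (((-(1 / (kB * T)) : ℝ) : ℂ) • H)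

/-- The Gibbs (thermal) state `γ = e^{-H/(k_B T)}/tr(e^{-H/(k_B T)})`. -/
def gibbs {d : ℕ} (kB T : ℝ) (H : Matrix (Fin d) (Fin d) ℂ) :
    Matrix (Fin d) (Fin d) ℂ :=
  ((boltzmann kB T H).trace)⁻¹ • boltzmann kB T H

/-- The optimal extractable work `W(ρ,H) = (k_B T ln 2)·D(ρ‖γ)`. -/
def work {d : ℕ} (kB T : ℝ) (ρ H : Matrix (Fin d) (Fin d) ℂ) : ℝ :=
  kB * T * Real.log 2 * relEnt2 ρ (gibbs kB T H)

/-- Work extractable from the information content: `W_inf(ρ) = W(ρ,0) = (k_B T ln 2)·D(ρ‖I/d)`. -/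
def workInf {d : ℕ} (kB T : ℝ) (ρ : Matrix (Fin d) (Fin d) ℂ) : ℝ :=
  kB * T * Real.log 2 * relEnt2 ρ (((d : ℂ))⁻¹ • (1 : Matrix (Fin d) (Fin d) ℂ))

/-- The work deficit `Δ(ρ,H) = W(ρ,H) − W_inf(ρ)`. -/
def workDeficit {d : ℕ} (kB T : ℝ) (ρ H : Matrix (Fin d) (Fin d) ℂ) : ℝ :=
  work kB T ρ H - workInf kB T ρ

/-- A state assemblage on a `d`-dimensional system `B`, with `nA` outcomes and `nX`
measurement settings: positive semidefinite operators with no-signalling marginals of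
unit trace. -/
def IsAssemblage {d nA nX : ℕ} (A : Fin nA → Fin nX → Matrix (Fin d) (Fin d) ℂ) : Prop :=
  (∀ a x, (A a x).PosSemidef) ∧
  (∀ x x', ∑ a, A a x = ∑ a, A a x') ∧
  (∀ x, (∑ a, A a x).trace = 1)

/-- An assemblage admits a local hidden-state (LHS) model if
`A_{a|x} = Σ_λ P(a|x,λ) P(λ) ρ_λ` for some finite hidden variable `λ`, probability
distribution `P(λ)`, conditional distributions `P(a|x,λ)` and density matrices `ρ_λ`. -/
def IsLHS {d nA nX : ℕ} (A : Fin nA → Fin nX → Matrix (Fin d) (Fin d) ℂ) : Prop :=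
  ∃ (nL : ℕ) (p : Fin nL → ℝ) (P : Fin nA → Fin nX → Fin nL → ℝ)
    (ρ : Fin nL → Matrix (Fin d) (Fin d) ℂ),
    (∀ l, 0 ≤ p l) ∧ (∑ l, p l = 1) ∧
    (∀ a x l, 0 ≤ P a x l) ∧ (∀ x l, ∑ a, P a x l = 1) ∧
    (∀ l, IsDensity (ρ l)) ∧
    (∀ a x, A a x = ∑ l, ((P a x l * p l : ℝ) : ℂ) • ρ l)

/-- `LHSof A`: the LHS assemblages reproducing the outcome statistics of `A`. -/
def LHSof {d nA nX : ℕ} (A : Fin nA → Fin nX → Matrix (Fin d) (Fin d) ℂ) :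
    Set (Fin nA → Fin nX → Matrix (Fin d) (Fin d) ℂ) :=
  {B | IsLHS B ∧ ∀ a x, (B a x).trace = (A a x).trace}

/-- The conditional (normalized) state of an unnormalized member of an assemblage
(junk value `I/d` when the trace vanishes). -/
def condState {d : ℕ} (A : Matrix (Fin d) (Fin d) ℂ) : Matrix (Fin d) (Fin d) ℂ :=
  if A.trace = 0 then ((d : ℂ))⁻¹ • 1 else (A.trace)⁻¹ • A

/-- The averaged work deficit
`Δ̄(A,H) = Σ_{a,x} P(x) P(a|x) Δ(η_{a|x}, H_{a|x})` with uniform `P(x) = 1/|X|`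
and `A_{a|x} = P(a|x) η_{a|x}`. -/
def avgDeficit {d nA nX : ℕ} (kB T : ℝ)
    (A H : Fin nA → Fin nX → Matrix (Fin d) (Fin d) ℂ) : ℝ :=
  ∑ x, ∑ a, ((nX : ℝ))⁻¹ * ((A a x).trace).re *
    workDeficit kB T (condState (A a x)) (H a x)


/-! ### Auxiliary lemmas -/

lemma real_smul_mat' {d : ℕ} (r : ℝ) (M : Matrix (Fin d) (Fin d) ℂ) :
    r • M = ((r : ℂ)) • M := by
  ext i j
  simp [Matrix.smul_apply, Complex.real_smul]

lemma herFun_eq_cfc' {d : ℕ} (f : ℝ → ℝ) (A : Matrix (Fin d) (Fin d) ℂ) (hA : A.IsHermitian) :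
    herFun f A = cfc f A := by
  rw [herFun, dif_pos hA, hA.cfc_eq]
  rfl

lemma trace_conj_unitary' {d : ℕ} (U : Matrix.unitaryGroup (Fin d) ℂ)
    (D : Matrix (Fin d) (Fin d) ℂ) :
    ((U : Matrix (Fin d) (Fin d) ℂ) * D * star (U : Matrix (Fin d) (Fin d) ℂ)).trace = D.trace := by
  rw [Matrix.trace_mul_cycle]
  rw [show star (U : Matrix (Fin d) (Fin d) ℂ) * ((U : Matrix (Fin d) (Fin d) ℂ)) = 1 from
    Matrix.UnitaryGroup.star_mul_self U]
  rw [one_mul]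

lemma herm_trace_eq' {d : ℕ} {A : Matrix (Fin d) (Fin d) ℂ} (hA : A.IsHermitian) :
    A.trace = ((∑ i, hA.eigenvalues i : ℝ) : ℂ) := by
  conv_lhs => rw [hA.spectral_theorem]
  rw [Unitary.conjStarAlgAut_apply, trace_conj_unitary', Matrix.trace_diagonal]
  push_cast
  rfl

lemma psd_eq_zero_of_trace' {d : ℕ} {A : Matrix (Fin d) (Fin d) ℂ} (hA : A.PosSemidef)
    (h : A.trace = 0) : A = 0 := by
  have h2 : ∀ i, hA.1.eigenvalues i = 0 := by
    have := herm_trace_eq' hA.1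
    rw [h] at this
    have hsum : (∑ i, hA.1.eigenvalues i) = 0 := by exact_mod_cast this.symm
    intro i
    have hnn := hA.eigenvalues_nonneg
    exact (Finset.sum_eq_zero_iff_of_nonneg (fun j _ => hnn j)).mp hsum i (Finset.mem_univ i)
  conv_lhs => rw [hA.1.spectral_theorem]
  have hdiag : Matrix.diagonal (RCLike.ofReal ∘ hA.1.eigenvalues) = (0 : Matrix (Fin d) (Fin d) ℂ) := by
    ext i j
    by_cases hij : i = j <;> simp [Matrix.diagonal, hij, h2]
  rw [hdiag, Unitary.conjStarAlgAut_apply, mul_zero, zero_mul]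

lemma psd_smul' {d : ℕ} {r : ℝ} (hr : 0 ≤ r) {M : Matrix (Fin d) (Fin d) ℂ}
    (hM : M.PosSemidef) : (((r : ℝ) : ℂ) • M).PosSemidef := by
  constructor
  · have : star ((r : ℂ)) • Mᴴ = ((r : ℂ)) • M := by
      rw [Complex.star_def, Complex.conj_ofReal, hM.1]
    simpa [Matrix.IsHermitian, Matrix.conjTranspose_smul] using this
  · intro x
    have h0 : (0 : ℂ) ≤ (r : ℂ) := by
      rw [Complex.zero_le_real]
      exact hr
    simpa [Matrix.smul_mulVec, dotProduct_smul, Finsupp.mul_sum, mul_assoc, mul_left_comm] using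
      mul_nonneg h0 (hM.2 x)

lemma exp_smul_herm' {d : ℕ} (r : ℝ) {F : Matrix (Fin d) (Fin d) ℂ} (hF : F.IsHermitian) :
    NormedSpace.exp (((r : ℝ) : ℂ) • F) = cfc (fun t => Real.exp (r * t)) F := by
  have hUinv : ((Unitary.toUnits hF.eigenvectorUnitary)⁻¹ : (Matrix (Fin d) (Fin d) ℂ)ˣ)
      = (star (hF.eigenvectorUnitary : Matrix (Fin d) (Fin d) ℂ)) := by
    simp [Unitary.toUnits]
  have hU : ((Unitary.toUnits hF.eigenvectorUnitary) : (Matrix (Fin d) (Fin d) ℂ)ˣ)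
      = ((hF.eigenvectorUnitary : Matrix (Fin d) (Fin d) ℂ)) := rfl
  have key : ((r : ℂ)) • F =
      ((Unitary.toUnits hF.eigenvectorUnitary) : (Matrix (Fin d) (Fin d) ℂ)ˣ) *
        Matrix.diagonal (fun i => (r : ℂ) * (hF.eigenvalues i : ℂ)) *
        ((Unitary.toUnits hF.eigenvectorUnitary)⁻¹ : (Matrix (Fin d) (Fin d) ℂ)ˣ) := by
    rw [hU, hUinv]
    conv_lhs => rw [hF.spectral_theorem, Unitary.conjStarAlgAut_apply]
    rw [mul_assoc, ← mul_smul_comm, ← smul_mul_assoc, ← mul_assoc]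
    congr 2
    rw [← Matrix.diagonal_smul]
    congr 1
  rw [key, Matrix.exp_units_conj, Matrix.exp_diagonal, hU, hUinv, (hF.cfc_eq _)]
  unfold Matrix.IsHermitian.cfc
  have hfun : NormedSpace.exp (fun i => (r : ℂ) * (hF.eigenvalues i : ℂ))
      = (RCLike.ofReal ∘ (fun t => Real.exp (r * t)) ∘ hF.eigenvalues :
          Fin d → ℂ) := by
    rw [Pi.exp_def]
    funext i
    rw [← Complex.exp_eq_exp_ℂ, ← Complex.ofReal_mul]
    simp [Function.comp, Complex.ofReal_exp, RCLike.ofReal]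
  rw [hfun, Unitary.conjStarAlgAut_apply]

lemma log2_inv_smul_one' {d : ℕ} :
    matLog2 (((d : ℂ))⁻¹ • (1 : Matrix (Fin d) (Fin d) ℂ)) =
      ((-Real.logb 2 d : ℝ) : ℂ) • (1 : Matrix (Fin d) (Fin d) ℂ) := by
  have h1 : ((d : ℂ))⁻¹ • (1 : Matrix (Fin d) (Fin d) ℂ) =
      algebraMap ℝ (Matrix (Fin d) (Fin d) ℂ) ((d : ℝ))⁻¹ := by
    rw [Algebra.algebraMap_eq_smul_one, real_smul_mat']
    push_cast
    rfl
  have hherm : (((d : ℂ))⁻¹ • (1 : Matrix (Fin d) (Fin d) ℂ)).IsHermitian := by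
    rw [h1]
    exact (IsSelfAdjoint.algebraMap _ (by exact star_trivial _) :
      IsSelfAdjoint (algebraMap ℝ (Matrix (Fin d) (Fin d) ℂ) ((d : ℝ))⁻¹))
  rw [matLog2, herFun_eq_cfc' _ _ hherm, h1, cfc_algebraMap,
    Algebra.algebraMap_eq_smul_one, real_smul_mat']
  congr 2
  rw [Real.logb, Real.logb, Real.log_inv]
  push_cast
  ring

lemma matLog2_gibbs' {d : ℕ} (hd : 0 < d) {kB T : ℝ} (hkB : 0 < kB) (hT : 0 < T)
    {F : Matrix (Fin d) (Fin d) ℂ} (hF : F.IsHermitian) :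
    matLog2 (gibbs kB T (((kB * T * Real.log 2 : ℝ) : ℂ) • F)) =
      -F - ((Real.logb 2 (∑ i, Real.exp (-Real.log 2 * hF.eigenvalues i)) : ℝ) : ℂ) •
        (1 : Matrix (Fin d) (Fin d) ℂ) := by
  have hkT : kB * T ≠ 0 := by positivity
  set Z : ℝ := ∑ i, Real.exp (-Real.log 2 * hF.eigenvalues i) with hZdef
  have : Nonempty (Fin d) := ⟨⟨0, hd⟩⟩
  have hZ : 0 < Z := Finset.sum_pos (fun i _ => Real.exp_pos _) Finset.univ_nonempty
  have hbolt : boltzmann kB T (((kB * T * Real.log 2 : ℝ) : ℂ) • F) =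
      cfc (fun t => Real.exp (-Real.log 2 * t)) F := by
    rw [boltzmann, smul_smul]
    rw [show ((-(1 / (kB * T)) : ℝ) : ℂ) * ((kB * T * Real.log 2 : ℝ) : ℂ)
        = ((-Real.log 2 : ℝ) : ℂ) by
      rw [← Complex.ofReal_mul]
      congr 1
      field_simp]
    exact exp_smul_herm' _ hF
  have htr : (boltzmann kB T (((kB * T * Real.log 2 : ℝ) : ℂ) • F)).trace = ((Z : ℝ) : ℂ) := by
    rw [hbolt, hF.cfc_eq]
    unfold Matrix.IsHermitian.cfc
    rw [Unitary.conjStarAlgAut_apply, trace_conj_unitary', Matrix.trace_diagonal, hZdef]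
    rw [Complex.ofReal_sum]
    congr 1
  have hgibbs : gibbs kB T (((kB * T * Real.log 2 : ℝ) : ℂ) • F) =
      cfc (fun t => Z⁻¹ * Real.exp (-Real.log 2 * t)) F := by
    rw [gibbs, htr, hbolt, ← Complex.ofReal_inv, ← real_smul_mat',
      ← cfc_smul (Z⁻¹ : ℝ) (fun t => Real.exp (-Real.log 2 * t)) F]
    simp [smul_eq_mul]
  have hγ : (gibbs kB T (((kB * T * Real.log 2 : ℝ) : ℂ) • F)).IsHermitian := by
    rw [hgibbs]
    have h := cfc_predicate (R := ℝ) (p := IsSelfAdjoint)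
      (fun t => Z⁻¹ * Real.exp (-Real.log 2 * t)) F
    exact h
  rw [matLog2, herFun_eq_cfc' _ _ hγ, hgibbs,
    ← cfc_comp' (Real.logb 2) (fun t => Z⁻¹ * Real.exp (-Real.log 2 * t)) F
      (by
        apply Real.continuousOn_logb.mono
        rintro y ⟨t, -, rfl⟩
        simp only [Set.mem_compl_iff, Set.mem_singleton_iff]
        positivity)
      (by fun_prop)]
  have hfun : (fun t => Real.logb 2 (Z⁻¹ * Real.exp (-Real.log 2 * t)))
      = fun t : ℝ => -t - Real.logb 2 Z := by
    funext t
    have hl2 : Real.log 2 ≠ 0 := ne_of_gt (Real.log_pos (by norm_num))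
    rw [Real.logb, Real.logb,
      Real.log_mul (inv_ne_zero (ne_of_gt hZ)) (Real.exp_ne_zero _),
      Real.log_inv, Real.log_exp]
    field_simp
    ring
  rw [hfun]
  have hsplit : (fun t : ℝ => -t - Real.logb 2 Z)
      = fun t : ℝ => (fun s : ℝ => -s) t - (fun _ : ℝ => Real.logb 2 Z) t := rfl
  rw [hsplit, cfc_sub _ _ F (by fun_prop) (by fun_prop),
    cfc_const (Real.logb 2 Z) F, Algebra.algebraMap_eq_smul_one, real_smul_mat']
  congr 1
  have : (fun s : ℝ => -s) = fun s : ℝ => -(id s) := rfl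
  rw [this, cfc_neg (id : ℝ → ℝ) F, cfc_id ℝ F]

lemma workDeficit_formula' {d : ℕ} (hd : 0 < d) {kB T : ℝ} (hkB : 0 < kB) (hT : 0 < T)
    {F : Matrix (Fin d) (Fin d) ℂ} (hF : F.PosSemidef) :
    ∃ K : ℝ, ∀ ρ : Matrix (Fin d) (Fin d) ℂ,
      workDeficit kB T ρ (((kB * T * Real.log 2 : ℝ) : ℂ) • F) =
        kB * T * Real.log 2 * (((ρ * F).trace).re + K * (ρ.trace).re) := by
  refine ⟨Real.logb 2 (∑ i, Real.exp (-Real.log 2 * hF.1.eigenvalues i)) - Real.logb 2 d,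
    fun ρ => ?_⟩
  set K : ℝ := Real.logb 2 (∑ i, Real.exp (-Real.log 2 * hF.1.eigenvalues i)) - Real.logb 2 d
    with hKdef
  rw [workDeficit, work, workInf, relEnt2, relEnt2, ← mul_sub, ← Complex.sub_re,
    ← Matrix.trace_sub, ← mul_sub, sub_sub_sub_cancel_left]
  rw [log2_inv_smul_one', matLog2_gibbs' hd hkB hT hF.1]
  have hcomb : ((-Real.logb 2 d : ℝ) : ℂ) • (1 : Matrix (Fin d) (Fin d) ℂ) -
      (-F - ((Real.logb 2 (∑ i, Real.exp (-Real.log 2 * hF.1.eigenvalues i)) : ℝ) : ℂ) • 1)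
      = F + ((K : ℝ) : ℂ) • (1 : Matrix (Fin d) (Fin d) ℂ) := by
    rw [hKdef]
    push_cast
    module
  rw [hcomb, mul_add, Matrix.trace_add, mul_smul_comm, mul_one, Matrix.trace_smul,
    Complex.add_re, smul_eq_mul]
  have : (((K : ℝ) : ℂ) * ρ.trace).re = K * (ρ.trace).re := by
    simp [Complex.mul_re]
  rw [this]

lemma term_formula' {d : ℕ} (nX : ℕ) (hd : 0 < d) {kB T : ℝ} (hkB : 0 < kB) (hT : 0 < T)
    {F M : Matrix (Fin d) (Fin d) ℂ} (hM : M.PosSemidef) (K : ℝ)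
    (hK : ∀ ρ : Matrix (Fin d) (Fin d) ℂ,
      workDeficit kB T ρ (((kB * T * Real.log 2 : ℝ) : ℂ) • F) =
        kB * T * Real.log 2 * (((ρ * F).trace).re + K * (ρ.trace).re)) :
    ((nX : ℝ))⁻¹ * ((M.trace).re) *
        workDeficit kB T (condState M) (((kB * T * Real.log 2 : ℝ) : ℂ) • F)
      = ((nX : ℝ))⁻¹ * (kB * T * Real.log 2) * (((M * F).trace).re + K * ((M.trace).re)) := by
  have hreal : M.trace = (((M.trace).re : ℝ) : ℂ) := by
    rw [herm_trace_eq' hM.1]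
    simp
  by_cases ht : M.trace = 0
  · have hM0 : M = 0 := psd_eq_zero_of_trace' hM ht
    simp [hM0, ht]
  · have hs : (M.trace).re ≠ 0 := fun h => ht (by rw [hreal, h]; simp)
    rw [condState, if_neg ht, hK]
    rw [Matrix.smul_mul, Matrix.trace_smul, Matrix.trace_smul, smul_eq_mul, smul_eq_mul,
      inv_mul_cancel₀ ht]
    have key : ((M.trace)⁻¹ * (M * F).trace).re = ((M.trace).re)⁻¹ * ((M * F).trace).re := by
      conv_lhs => rw [hreal]
      rw [← Complex.ofReal_inv]
      simp [Complex.mul_re]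
    rw [key, Complex.one_re, mul_one]
    have scalar : ∀ (n c s u k : ℝ), s ≠ 0 → n * s * (c * (s⁻¹ * u + k)) = n * c * (u + k * s) := by
      intros n c s u k hs0
      field_simp
    exact scalar _ _ _ _ _ hs
/-- a strictly separating family of positive semidefinite witnesses
`{F_{a|x}}` for an assemblage `A` against the LHS set yields, at every temperature
`T > 0`, positive semidefinite Hamiltonians `{H_{a|x} ≥ 0}` such that the averaged work
deficit of `A` strictly exceeds that of every LHS assemblage reproducing the statistics
of `A`. -/
theorem witness_to_work_deficit_gap {d nA nX : ℕ} (kB : ℝ) (hkB : 0 < kB)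
    (A : Fin nA → Fin nX → Matrix (Fin d) (Fin d) ℂ) (hA : IsAssemblage A)
    (F : Fin nA → Fin nX → Matrix (Fin d) (Fin d) ℂ)
    (hF : ∀ a x, (F a x).PosSemidef)
    (hwit : ∀ B : Fin nA → Fin nX → Matrix (Fin d) (Fin d) ℂ, IsLHS B →
      (∑ x, ∑ a, ((F a x * B a x).trace).re) < ∑ x, ∑ a, ((F a x * A a x).trace).re) :
    ∀ T : ℝ, 0 < T →
      ∃ H : Fin nA → Fin nX → Matrix (Fin d) (Fin d) ℂ,
        (∀ a x, (H a x).PosSemidef) ∧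
        ∀ B ∈ LHSof A, avgDeficit kB T B H < avgDeficit kB T A H := by
  intro T hT
  have hc : 0 < kB * T * Real.log 2 :=
    mul_pos (mul_pos hkB hT) (Real.log_pos (by norm_num))
  refine ⟨fun a x => ((kB * T * Real.log 2 : ℝ) : ℂ) • F a x,
    fun a x => psd_smul' hc.le (hF a x), ?_⟩
  rintro B ⟨hBlhs, hBtr⟩
  rcases Nat.eq_zero_or_pos d with hd | hd
  · exfalso
    subst hd
    have h := hwit B hBlhs
    simp [Matrix.trace] at h
  rcases Nat.eq_zero_or_pos nX with hnX | hnX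
  · exfalso
    subst hnX
    have h := hwit B hBlhs
    simp at h
  have hBpsd : ∀ a x, (B a x).PosSemidef := by
    obtain ⟨nL, p, P, ρ, hp, hpsum, hP, hPsum, hρ, hrep⟩ := hBlhs
    intro a x
    rw [hrep a x]
    apply Finset.sum_induction _ Matrix.PosSemidef (fun _ _ => Matrix.PosSemidef.add)
      Matrix.PosSemidef.zero
    intro l _
    exact psd_smul' (mul_nonneg (hP a x l) (hp l)) (hρ l).1
  have hform := fun (a : Fin nA) (x : Fin nX) => workDeficit_formula' hd hkB hT (hF a x)
  choose K hK using hform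
  have hAterm : ∀ a x, ((nX : ℝ))⁻¹ * (((A a x).trace).re) *
        workDeficit kB T (condState (A a x)) (((kB * T * Real.log 2 : ℝ) : ℂ) • F a x)
      = ((nX : ℝ))⁻¹ * (kB * T * Real.log 2) *
          (((A a x * F a x).trace).re + K a x * (((A a x).trace).re)) :=
    fun a x => term_formula' nX hd hkB hT (hA.1 a x) (K a x) (hK a x)
  have hBterm : ∀ a x, ((nX : ℝ))⁻¹ * (((B a x).trace).re) *
        workDeficit kB T (condState (B a x)) (((kB * T * Real.log 2 : ℝ) : ℂ) • F a x)
      = ((nX : ℝ))⁻¹ * (kB * T * Real.log 2) *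
          (((B a x * F a x).trace).re + K a x * (((A a x).trace).re)) := by
    intro a x
    rw [term_formula' nX hd hkB hT (hBpsd a x) (K a x) (hK a x), hBtr a x]
  have hsplit : ∀ (C : Fin nA → Fin nX → Matrix (Fin d) (Fin d) ℂ),
      (∑ x, ∑ a, ((nX : ℝ))⁻¹ * (kB * T * Real.log 2) *
          (((C a x * F a x).trace).re + K a x * (((A a x).trace).re)))
        = ((nX : ℝ))⁻¹ * (kB * T * Real.log 2) *
            ((∑ x, ∑ a, ((C a x * F a x).trace).re)
              + ∑ x, ∑ a, K a x * (((A a x).trace).re)) := by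
    intro C
    simp only [mul_add, Finset.sum_add_distrib, ← Finset.mul_sum]
  have havgA : avgDeficit kB T A (fun a x => ((kB * T * Real.log 2 : ℝ) : ℂ) • F a x)
      = ((nX : ℝ))⁻¹ * (kB * T * Real.log 2) *
          ((∑ x, ∑ a, ((A a x * F a x).trace).re)
            + ∑ x, ∑ a, K a x * (((A a x).trace).re)) := by
    rw [avgDeficit, ← hsplit A]
    exact Finset.sum_congr rfl fun x _ => Finset.sum_congr rfl fun a _ => hAterm a x
  have havgB : avgDeficit kB T B (fun a x => ((kB * T * Real.log 2 : ℝ) : ℂ) • F a x)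
      = ((nX : ℝ))⁻¹ * (kB * T * Real.log 2) *
          ((∑ x, ∑ a, ((B a x * F a x).trace).re)
            + ∑ x, ∑ a, K a x * (((A a x).trace).re)) := by
    rw [avgDeficit, ← hsplit B]
    exact Finset.sum_congr rfl fun x _ => Finset.sum_congr rfl fun a _ => hBterm a x
  rw [havgA, havgB]
  have hpos : (0 : ℝ) < ((nX : ℝ))⁻¹ * (kB * T * Real.log 2) := by
    apply mul_pos _ hc
    simp only [inv_pos]
    exact_mod_cast hnX
  apply mul_lt_mul_of_pos_left _ hpos
  apply (add_lt_add_iff_right _).2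
  have h := hwit B hBlhs
  calc (∑ x, ∑ a, ((B a x * F a x).trace).re)
      = ∑ x, ∑ a, ((F a x * B a x).trace).re := by
        exact Finset.sum_congr rfl fun x _ => Finset.sum_congr rfl fun a _ => by
          rw [Matrix.trace_mul_comm]
    _ < ∑ x, ∑ a, ((F a x * A a x).trace).re := h
    _ = ∑ x, ∑ a, ((A a x * F a x).trace).re := by
        exact Finset.sum_congr rfl fun x _ => Finset.sum_congr rfl fun a _ => by
          rw [Matrix.trace_mul_comm]
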